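/- Let G be a graph, let P be a set of distinguishable (k+1)-profiles with k = κ(P,G), and let (A₁,A₂), (B₁,B₂) be two separations of order k each of which distinguishes some pair of profiles in P efficiently. Then there are two opposite corner separations of (A₁,A₂) and (B₁,B₂) that have order exactly k and distinguish some pair of profiles in P. -/

import Mathlib

open Set

universe u

variable {V : Type*}

/-- A separation of a graph `G`: a pair of vertex sets covering `V` with no edge
between `A \ B` and `B \ A`. -/
def IsSep (G : SimpleGraph V) (A B : Set V) : Prop :=
  A ∪ B = Set.univ ∧ ∀ a ∈ A \ B, ∀ b ∈ B \ A, ¬ G.Adj a b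

/-- The order on separations: `(A,B) ≤ (C,D)` iff `A ⊆ C` and `D ⊆ B`. -/
def SepLE (A B C D : Set V) : Prop := A ⊆ C ∧ D ⊆ B

/-- Two separations are nested if one is comparable with the other or its reverse. -/
def Nested (A B C D : Set V) : Prop :=
  SepLE A B C D ∨ SepLE C D A B ∨ SepLE A B D C ∨ SepLE D C A B

/-- A set of separations is consistent. -/
def Consistent (P : Set (Set V × Set V)) : Prop :=
  ∀ A B C D : Set V, (A, B) ∈ P → SepLE C D A B → (D, C) ∉ P

/-- The profile axiom (P2). -/
def P2 (P : Set (Set V × Set V)) : Prop :=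
  ∀ p ∈ P, ∀ q ∈ P, (p.2 ∩ q.2, p.1 ∪ q.1) ∉ P

/-- A profile is principal if every subfamily with equal separators has a common
vertex in the intersection of the big sides minus the small sides. -/
def Principal (P : Set (Set V × Set V)) : Prop :=
  ∀ Q ⊆ P, Q.Nonempty → (∀ p ∈ Q, ∀ q ∈ Q, p.1 ∩ p.2 = q.1 ∩ q.2) →
    (⋂ p ∈ Q, (p.2 \ p.1)).Nonempty

/-- Robustness of a set of separations. -/
def Robust (G : SimpleGraph V) (P : Set (Set V × Set V)) : Prop :=
  ∀ A B : Set V, (A, B) ∈ P → (A ∩ B).Finite →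
    ∀ C D : Set V, IsSep G C D → (C ∩ D).Finite →
      ((B ∩ C) ∩ (A ∪ D)).ncard < (A ∩ B).ncard →
      ((B ∩ D) ∩ (A ∪ C)).ncard < (A ∩ B).ncard →
      ((B ∩ C, A ∪ D) ∉ P ∨ (B ∩ D, A ∪ C) ∉ P)

/-- `C` is a (connected) component of `G - X`. -/
def IsComponent (G : SimpleGraph V) (X C : Set V) : Prop :=
  C.Nonempty ∧ C ⊆ Xᶜ ∧ (G.induce C).Connected ∧
    ∀ D : Set V, C ⊆ D → D ⊆ Xᶜ → (G.induce D).Connected → D = C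

/-- The neighbourhood of a vertex set. -/
def setNbhd (G : SimpleGraph V) (C : Set V) : Set V :=
  {v | v ∉ C ∧ ∃ c ∈ C, G.Adj v c}

/-- A separation `(A,B)` distinguishes two profiles. -/
def Distinguishes (A B : Set V) (P P' : Set (Set V × Set V)) : Prop :=
  ((A, B) ∈ P ∧ (B, A) ∈ P') ∨ ((A, B) ∈ P' ∧ (B, A) ∈ P)

/-- A tree-decomposition of `G` modelled on a tree `T`. -/
structure TreeDecomp (G : SimpleGraph V) {τ : Type*} (T : SimpleGraph τ) where
  bag : τ → Set V
  isTree : T.IsTree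
  covers : ∀ v : V, ∃ t, v ∈ bag t
  coversEdges : ∀ u v : V, G.Adj u v → ∃ t, u ∈ bag t ∧ v ∈ bag t
  pathInter : ∀ t₁ t₂ t₃ : τ, ∀ p : T.Walk t₁ t₃, p.IsPath → t₂ ∈ p.support →
    bag t₁ ∩ bag t₃ ⊆ bag t₂

/-- The union of the bags on the side of `s` of the edge `ss'` of the decomposition tree. -/
def sideSet {G : SimpleGraph V} {τ : Type*} {T : SimpleGraph τ} (td : TreeDecomp G T)
    (s s' : τ) : Set V :=
  ⋃ t ∈ {t | (T.deleteEdges {s(s, s')}).Reachable s t}, td.bag t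

/-- The torso of the part `bag t`, as a graph on `V` whose edges live inside `bag t`. -/
def torso (G : SimpleGraph V) {τ : Type*} (T : SimpleGraph τ) (td : TreeDecomp G T)
    (t : τ) : SimpleGraph V where
  Adj x y := x ≠ y ∧ x ∈ td.bag t ∧ y ∈ td.bag t ∧
    (G.Adj x y ∨ ∃ t', T.Adj t t' ∧ x ∈ td.bag t' ∧ y ∈ td.bag t')
  symm := ⟨by
    rintro x y ⟨h1, h2, h3, h4⟩
    refine ⟨h1.symm, h3, h2, ?_⟩
    rcases h4 with h | ⟨t', ht, hx, hy⟩
    · exact Or.inl h.symm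
    · exact Or.inr ⟨t', ht, hy, hx⟩⟩
  loopless := ⟨by rintro x ⟨h1, -⟩; exact h1 rfl⟩

/-- The profile induced by an end of `G`: all separations of finite order such that the
component of the complement of the separator in which the end lives is contained in the
big side. -/
def endProfile (G : SimpleGraph V) (e : ↥G.end) : Set (Set V × Set V) :=
  {p | IsSep G p.1 p.2 ∧ ∃ hf : (p.1 ∩ p.2).Finite,
    ((e.val (Opposite.op hf.toFinset)).supp ⊆ p.2)}


/-- An `l`-profile of `G`: a consistent set of separations of order `< l` satisfying (P2)
and containing an orientation of every separation of order `< l`. -/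
def IsLProfile (G : SimpleGraph V) (P : Set (Set V × Set V)) (l : ℕ) : Prop :=
  Consistent P ∧ P2 P ∧
  (∀ p ∈ P, IsSep G p.1 p.2 ∧ (p.1 ∩ p.2).Finite ∧ (p.1 ∩ p.2).ncard < l) ∧
  (∀ A B : Set V, IsSep G A B → (A ∩ B).Finite → (A ∩ B).ncard < l →
    (A, B) ∈ P ∨ (B, A) ∈ P)

/-!
Choose profiles `R, R'` such that `(A₁,A₂)` and `(B₁,B₂)` both point towards `R` and away
from `R'` (after possibly reversing `(B₁,B₂)`); such a pair exists because every profile in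
`Ps` orients both separations. The orders of the opposite corners `(A₁ ∩ B₁, A₂ ∪ B₂)` and
`(A₂ ∩ B₂, A₁ ∪ B₁)` sum to `2k`, so one of them has order `≤ k`. Such a corner lies in `R` by
consistency and its reverse lies in `R'` by (P2), so it distinguishes `R` and `R'`, and by
minimality of `k` its order is exactly `k`; hence the other corner has order `k` as well and
distinguishes `R` and `R'` by the same argument.
-/

section Separations

variable {G : SimpleGraph V} {A B A₁ A₂ B₁ B₂ : Set V}

theorem IsSep.symm (h : IsSep G A B) : IsSep G B A :=
  ⟨by rw [union_comm]; exact h.1, fun a ha b hb hab => h.2 b hb a ha hab.symm⟩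

theorem IsSep.mem_or_mem (h : IsSep G A B) (x : V) : x ∈ A ∨ x ∈ B :=
  eq_univ_iff_forall.mp h.1 x

theorem IsSep.inter_union (hA : IsSep G A₁ A₂) (hB : IsSep G B₁ B₂) :
    IsSep G (A₁ ∩ B₁) (A₂ ∪ B₂) := by
  refine ⟨eq_univ_iff_forall.mpr fun x => ?_, ?_⟩
  · have := hA.mem_or_mem x
    have := hB.mem_or_mem x
    simp only [mem_union, mem_inter_iff]
    tauto
  · rintro a ⟨⟨haA, haB⟩, ha⟩ b ⟨-, hb⟩ hab
    rw [mem_union, not_or] at ha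
    by_cases hbA : b ∈ A₁
    · have hbB : b ∉ B₁ := fun h => hb ⟨hbA, h⟩
      exact hB.2 a ⟨haB, ha.2⟩ b ⟨(hB.mem_or_mem b).resolve_left hbB, hbB⟩ hab
    · exact hA.2 a ⟨haA, ha.1⟩ b ⟨(hA.mem_or_mem b).resolve_left hbA, hbA⟩ hab

theorem finite_corner (hAf : (A₁ ∩ A₂).Finite) (hBf : (B₁ ∩ B₂).Finite) :
    ((A₁ ∩ B₁) ∩ (A₂ ∪ B₂)).Finite :=
  (hAf.union hBf).subset fun _ ⟨⟨h₁, h₂⟩, h⟩ => h.imp (⟨h₁, ·⟩) (⟨h₂, ·⟩)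

theorem ncard_corner_add_ncard_opposite_corner (hA : A₁ ∪ A₂ = univ) (hB : B₁ ∪ B₂ = univ)
    (hAf : (A₁ ∩ A₂).Finite) (hBf : (B₁ ∩ B₂).Finite) :
    ((A₁ ∩ B₁) ∩ (A₂ ∪ B₂)).ncard + ((A₂ ∩ B₂) ∩ (A₁ ∪ B₁)).ncard
      = (A₁ ∩ A₂).ncard + (B₁ ∩ B₂).ncard := by
  have hunion : (A₁ ∩ B₁) ∩ (A₂ ∪ B₂) ∪ (A₂ ∩ B₂) ∩ (A₁ ∪ B₁) = (A₁ ∩ A₂) ∪ (B₁ ∩ B₂) := by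
    ext x
    have := eq_univ_iff_forall.mp hA x
    have := eq_univ_iff_forall.mp hB x
    simp only [mem_union, mem_inter_iff] at *
    tauto
  have hinter : (A₁ ∩ B₁) ∩ (A₂ ∪ B₂) ∩ ((A₂ ∩ B₂) ∩ (A₁ ∪ B₁)) = (A₁ ∩ A₂) ∩ (B₁ ∩ B₂) := by
    ext x
    simp only [mem_union, mem_inter_iff]
    tauto
  have hAf' : (A₂ ∩ A₁).Finite := by rwa [inter_comm]
  have hBf' : (B₂ ∩ B₁).Finite := by rwa [inter_comm]
  rw [← ncard_union_add_ncard_inter _ _ (finite_corner hAf hBf) (finite_corner hAf' hBf'),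
    hunion, hinter, ncard_union_add_ncard_inter _ _ hAf hBf]

end Separations

section Profiles

variable {G : SimpleGraph V} {A B A₁ A₂ B₁ B₂ : Set V} {P P' : Set (Set V × Set V)}

theorem Distinguishes.symm (h : Distinguishes A B P P') : Distinguishes A B P' P :=
  Or.symm h

theorem distinguishes_comm : Distinguishes B A P P' ↔ Distinguishes A B P P' :=
  ⟨fun h => h.symm.imp And.symm And.symm, fun h => h.symm.imp And.symm And.symm⟩

theorem exists_oriented_of_distinguishes {Ps : Set (Set (Set V × Set V))}
    (h : ∃ P ∈ Ps, ∃ P' ∈ Ps, Distinguishes A B P P') :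
    ∃ P ∈ Ps, ∃ P' ∈ Ps, (A, B) ∈ P ∧ (B, A) ∈ P' := by
  obtain ⟨P, hP, P', hP', h | h⟩ := h
  exacts [⟨P, hP, P', hP', h⟩, ⟨P', hP', P, hP, h⟩]

theorem IsLProfile.distinguishes_corner {R R' : Set (Set V × Set V)} {l : ℕ}
    (hR : IsLProfile G R l) (hR' : IsLProfile G R' l)
    (hA₁ : (A₁, A₂) ∈ R) (hA₂ : (A₂, A₁) ∈ R') (hB₂ : (B₂, B₁) ∈ R')
    (hsep : IsSep G (A₁ ∩ B₁) (A₂ ∪ B₂)) (hfin : ((A₁ ∩ B₁) ∩ (A₂ ∪ B₂)).Finite)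
    (hord : ((A₁ ∩ B₁) ∩ (A₂ ∪ B₂)).ncard < l) :
    Distinguishes (A₁ ∩ B₁) (A₂ ∪ B₂) R R' := by
  have hcornerR : (A₁ ∩ B₁, A₂ ∪ B₂) ∈ R :=
    (hR.2.2.2 _ _ hsep hfin hord).resolve_right
      (hR.1 A₁ A₂ _ _ hA₁ ⟨inter_subset_left, subset_union_left⟩)
  have hcornerR' : (A₂ ∪ B₂, A₁ ∩ B₁) ∈ R' :=
    (hR'.2.2.2 _ _ hsep hfin hord).resolve_left (hR'.2.1 (A₂, A₁) hA₂ (B₂, B₁) hB₂)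
  exact Or.inl ⟨hcornerR, hcornerR'⟩

theorem opposite_corners_of_minimal {k : ℕ} {R R' : Set (Set V × Set V)}
    (hR : IsLProfile G R (k + 1)) (hR' : IsLProfile G R' (k + 1))
    (hmin : ∀ X Y : Set V, IsSep G X Y → Distinguishes X Y R R' → k ≤ (X ∩ Y).ncard)
    (hA : IsSep G A₁ A₂) (hB : IsSep G B₁ B₂)
    (hAf : (A₁ ∩ A₂).Finite) (hAord : (A₁ ∩ A₂).ncard = k)
    (hBf : (B₁ ∩ B₂).Finite) (hBord : (B₁ ∩ B₂).ncard = k)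
    (hA₁ : (A₁, A₂) ∈ R) (hA₂ : (A₂, A₁) ∈ R') (hB₁ : (B₁, B₂) ∈ R) (hB₂ : (B₂, B₁) ∈ R') :
    ((A₁ ∩ B₁) ∩ (A₂ ∪ B₂)).ncard = k ∧ ((A₂ ∩ B₂) ∩ (A₁ ∪ B₁)).ncard = k ∧
      Distinguishes (A₁ ∩ B₁) (A₂ ∪ B₂) R R' ∧ Distinguishes (A₂ ∩ B₂) (A₁ ∪ B₁) R R' := by
  have hsep₁ := hA.inter_union hB
  have hsep₂ := hA.symm.inter_union hB.symm
  have hdist₁ (h : ((A₁ ∩ B₁) ∩ (A₂ ∪ B₂)).ncard ≤ k) :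
      Distinguishes (A₁ ∩ B₁) (A₂ ∪ B₂) R R' :=
    hR.distinguishes_corner hR' hA₁ hA₂ hB₂ hsep₁ (finite_corner hAf hBf) (by omega)
  have hdist₂ (h : ((A₂ ∩ B₂) ∩ (A₁ ∪ B₁)).ncard ≤ k) :
      Distinguishes (A₂ ∩ B₂) (A₁ ∪ B₁) R R' :=
    (hR'.distinguishes_corner hR hA₂ hA₁ hB₁ hsep₂
      (finite_corner (by rwa [inter_comm]) (by rwa [inter_comm])) (by omega)).symm
  have hsum := ncard_corner_add_ncard_opposite_corner hA.1 hB.1 hAf hBf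
  have hord : ((A₁ ∩ B₁) ∩ (A₂ ∪ B₂)).ncard = k ∧ ((A₂ ∩ B₂) ∩ (A₁ ∪ B₁)).ncard = k := by
    rcases le_total ((A₁ ∩ B₁) ∩ (A₂ ∪ B₂)).ncard k with h | h
    · have := hmin _ _ hsep₁ (hdist₁ h)
      omega
    · have := hmin _ _ hsep₂ (hdist₂ (by omega))
      omega
  exact ⟨hord.1, hord.2, hdist₁ hord.1.le, hdist₂ hord.2.le⟩

variable {Ps : Set (Set (Set V × Set V))}

theorem exists_distinguishes_of_common_orientation {S : Set (Set V × Set V)}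
    (hP : P ∈ Ps) (hP' : P' ∈ Ps) (hS : S ∈ Ps)
    (hPA : (A₁, A₂) ∈ P) (hP'A : (A₂, A₁) ∈ P') (hSA : (A₁, A₂) ∈ S ∨ (A₂, A₁) ∈ S)
    (hPB : (B₁, B₂) ∈ P) (hP'B : (B₁, B₂) ∈ P') (hSB : (B₂, B₁) ∈ S) :
    ∃ R ∈ Ps, ∃ R' ∈ Ps, (A₁, A₂) ∈ R ∧ (A₂, A₁) ∈ R' ∧ Distinguishes B₁ B₂ R R' := by
  rcases hSA with hSA | hSA
  · exact ⟨S, hS, P', hP', hSA, hP'A, Or.inr ⟨hP'B, hSB⟩⟩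
  · exact ⟨P, hP, S, hS, hPA, hSA, Or.inl ⟨hPB, hSB⟩⟩

theorem exists_profiles_distinguished_by_both
    (hAor : ∀ P ∈ Ps, (A₁, A₂) ∈ P ∨ (A₂, A₁) ∈ P)
    (hBor : ∀ P ∈ Ps, (B₁, B₂) ∈ P ∨ (B₂, B₁) ∈ P)
    (hAdist : ∃ P ∈ Ps, ∃ P' ∈ Ps, Distinguishes A₁ A₂ P P')
    (hBdist : ∃ P ∈ Ps, ∃ P' ∈ Ps, Distinguishes B₁ B₂ P P') :
    ∃ R ∈ Ps, ∃ R' ∈ Ps, (A₁, A₂) ∈ R ∧ (A₂, A₁) ∈ R' ∧ Distinguishes B₁ B₂ R R' := by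
  obtain ⟨P, hP, P', hP', hPA, hP'A⟩ := exists_oriented_of_distinguishes hAdist
  obtain ⟨Q, hQ, Q', hQ', hQB, hQ'B⟩ := exists_oriented_of_distinguishes hBdist
  rcases hBor P hP with hPB | hPB <;> rcases hBor P' hP' with hP'B | hP'B
  · exact exists_distinguishes_of_common_orientation hP hP' hQ' hPA hP'A (hAor Q' hQ')
      hPB hP'B hQ'B
  · exact ⟨P, hP, P', hP', hPA, hP'A, Or.inl ⟨hPB, hP'B⟩⟩
  · exact ⟨P, hP, P', hP', hPA, hP'A, Or.inr ⟨hP'B, hPB⟩⟩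
  · obtain ⟨R, hR, R', hR', hRA, hR'A, hRB⟩ := exists_distinguishes_of_common_orientation
      hP hP' hQ hPA hP'A (hAor Q hQ) hPB hP'B hQB
    exact ⟨R, hR, R', hR', hRA, hR'A, distinguishes_comm.mp hRB⟩

end Profiles

theorem opposite_corners_relevant_general (G : SimpleGraph V)
    (Ps : Set (Set (Set V × Set V))) (k : ℕ)
    (hprof : ∀ P ∈ Ps, IsLProfile G P (k + 1))
    (hκ : ∀ A B : Set V, IsSep G A B →
      (∃ P ∈ Ps, ∃ P' ∈ Ps, Distinguishes A B P P') →
      (A ∩ B).Finite ∧ k ≤ (A ∩ B).ncard)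
    (A₁ A₂ B₁ B₂ : Set V) (hA : IsSep G A₁ A₂) (hB : IsSep G B₁ B₂)
    (hAf : (A₁ ∩ A₂).Finite) (hAord : (A₁ ∩ A₂).ncard = k)
    (hBf : (B₁ ∩ B₂).Finite) (hBord : (B₁ ∩ B₂).ncard = k)
    (hAdist : ∃ P ∈ Ps, ∃ P' ∈ Ps, Distinguishes A₁ A₂ P P')
    (hBdist : ∃ P ∈ Ps, ∃ P' ∈ Ps, Distinguishes B₁ B₂ P P') :
    ∃ X₁ Y₁ X₂ Y₂ : Set V,
      (((X₁, Y₁) = (A₁ ∩ B₁, A₂ ∪ B₂) ∧ (X₂, Y₂) = (A₂ ∩ B₂, A₁ ∪ B₁)) ∨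
       ((X₁, Y₁) = (A₁ ∩ B₂, A₂ ∪ B₁) ∧ (X₂, Y₂) = (A₂ ∩ B₁, A₁ ∪ B₂))) ∧
      (X₁ ∩ Y₁).ncard = k ∧ (X₂ ∩ Y₂).ncard = k ∧
      (∃ P ∈ Ps, ∃ P' ∈ Ps, Distinguishes X₁ Y₁ P P') ∧
      (∃ P ∈ Ps, ∃ P' ∈ Ps, Distinguishes X₂ Y₂ P P') := by
  have hAor (P) (hP : P ∈ Ps) := (hprof P hP).2.2.2 A₁ A₂ hA hAf (by omega)
  have hBor (P) (hP : P ∈ Ps) := (hprof P hP).2.2.2 B₁ B₂ hB hBf (by omega)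
  obtain ⟨R, hR, R', hR', hRA, hR'A, hRB⟩ :=
    exists_profiles_distinguished_by_both hAor hBor hAdist hBdist
  have hmin (X Y : Set V) (hXY : IsSep G X Y) (h : Distinguishes X Y R R') :
      k ≤ (X ∩ Y).ncard :=
    (hκ X Y hXY ⟨R, hR, R', hR', h⟩).2
  rcases hRB with ⟨hRB, hR'B⟩ | ⟨hR'B, hRB⟩
  · obtain ⟨h₁, h₂, d₁, d₂⟩ := opposite_corners_of_minimal (hprof R hR) (hprof R' hR') hmin
      hA hB hAf hAord hBf hBord hRA hR'A hRB hR'B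
    exact ⟨_, _, _, _, Or.inl ⟨rfl, rfl⟩, h₁, h₂, ⟨R, hR, R', hR', d₁⟩, ⟨R, hR, R', hR', d₂⟩⟩
  · obtain ⟨h₁, h₂, d₁, d₂⟩ := opposite_corners_of_minimal (hprof R hR) (hprof R' hR') hmin
      hA hB.symm hAf hAord (by rwa [inter_comm]) (by rwa [inter_comm]) hRA hR'A hRB hR'B
    exact ⟨_, _, _, _, Or.inr ⟨rfl, rfl⟩, h₁, h₂, ⟨R, hR, R', hR', d₁⟩, ⟨R, hR, R', hR', d₂⟩⟩

/-- for two relevant separations of minimal order `k`, two opposite corner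
separations have order exactly `k` and distinguish profiles in `Ps`. -/
theorem opposite_corners_relevant (G : SimpleGraph V)
    (Ps : Set (Set (Set V × Set V))) (k : ℕ)
    (hprof : ∀ P ∈ Ps, IsLProfile G P (k + 1))
    (hdist : ∀ P ∈ Ps, ∀ P' ∈ Ps, P ≠ P' →
      ∃ A B : Set V, IsSep G A B ∧ Distinguishes A B P P')
    (hκ : ∀ A B : Set V, IsSep G A B →
      (∃ P ∈ Ps, ∃ P' ∈ Ps, Distinguishes A B P P') →
      (A ∩ B).Finite ∧ k ≤ (A ∩ B).ncard)
    (A₁ A₂ B₁ B₂ : Set V) (hA : IsSep G A₁ A₂) (hB : IsSep G B₁ B₂)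
    (hAf : (A₁ ∩ A₂).Finite) (hAord : (A₁ ∩ A₂).ncard = k)
    (hBf : (B₁ ∩ B₂).Finite) (hBord : (B₁ ∩ B₂).ncard = k)
    (hAdist : ∃ P ∈ Ps, ∃ P' ∈ Ps, Distinguishes A₁ A₂ P P')
    (hBdist : ∃ P ∈ Ps, ∃ P' ∈ Ps, Distinguishes B₁ B₂ P P') :
    ∃ X₁ Y₁ X₂ Y₂ : Set V,
      (((X₁, Y₁) = (A₁ ∩ B₁, A₂ ∪ B₂) ∧ (X₂, Y₂) = (A₂ ∩ B₂, A₁ ∪ B₁)) ∨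
       ((X₁, Y₁) = (A₁ ∩ B₂, A₂ ∪ B₁) ∧ (X₂, Y₂) = (A₂ ∩ B₁, A₁ ∪ B₂))) ∧
      (X₁ ∩ Y₁).ncard = k ∧ (X₂ ∩ Y₂).ncard = k ∧
      (∃ P ∈ Ps, ∃ P' ∈ Ps, Distinguishes X₁ Y₁ P P') ∧
      (∃ P ∈ Ps, ∃ P' ∈ Ps, Distinguishes X₂ Y₂ P P') :=
  opposite_corners_relevant_general G Ps k hprof hκ A₁ A₂ B₁ B₂ hA hB hAf hAord hBf hBord hAdist
    hBdist
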